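/- Let G be a finite group and P a p-subgroup of G for some prime p. Then P is s-permutable in G if and only if O^p(G) ≤ N_G(P), where O^p(G) is the smallest normal subgroup of G whose quotient is a p-group. -/

import Mathlib

/-!
A subgroup `H` contains `O^p(G)` exactly when it contains every Sylow `q`-subgroup with `q ≠ p`:
these lie in every normal subgroup of `p`-power index, and conversely they also lie in the normal
core of such an `H`, which therefore has `p`-power index.

If `P` permutes with a Sylow `p`-subgroup `S`, then `PS` is a `p`-group containing `S`, so `P ≤ S`.
Hence `P` lies in the normal `p`-subgroup `core_G(S)`. For a Sylow `q`-subgroup `Q` with `q ≠ p`,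
`PQ ∩ core_G(S)` is a `p`-group of order dividing `|P||Q|`, so it equals `P`; being normal in `PQ`,
it is normalized by `Q`.

Conversely, if `O^p(G)` normalizes `P`, each such `Q` lies in `O^p(G) ≤ N_G(P)` and so permutes
with `P`. As `G = O^p(G) S` for a Sylow `p`-subgroup `S ≥ P`, every Sylow `p`-subgroup is `S^n`
with `n ∈ O^p(G)`, and so contains `P^n = P`.
-/

open Pointwise

/-- A subgroup `H` of `G` is s-permutable (s-quasinormal) in `G` if `H` permutes with
every Sylow subgroup of `G`. -/
def IsSPermutable {G : Type*} [Group G] (H : Subgroup G) : Prop :=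
  ∀ q : ℕ, q.Prime → ∀ Q : Sylow q G,
    (H : Set G) * ((Q : Subgroup G) : Set G) = ((Q : Subgroup G) : Set G) * (H : Set G)

/-- `O^p(G)`: the smallest normal subgroup of `G` whose quotient is a `p`-group,
realized as the infimum of all normal subgroups of `p`-power index. -/
def pResidual (p : ℕ) (G : Type*) [Group G] : Subgroup G :=
  sInf {N : Subgroup G | N.Normal ∧ ∃ k : ℕ, N.index = p ^ k}

namespace Subgroup

variable {G : Type*} [Group G]

theorem coe_sup_of_coe_mul_comm {H K : Subgroup G} (h : (H : Set G) * K = K * H) :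
    ((H ⊔ K : Subgroup G) : Set G) = H * K := by
  let J : Subgroup G :=
    { carrier := H * K
      one_mem' := ⟨1, H.one_mem, 1, K.one_mem, one_mul 1⟩
      mul_mem' := fun ha hb => by
        have hJJ : (H * K : Set G) * (H * K) = H * K := by
          rw [mul_assoc, ← mul_assoc (K : Set G), ← h, mul_assoc, coe_mul_coe, ← mul_assoc,
            coe_mul_coe]
        exact hJJ ▸ Set.mul_mem_mul ha hb
      inv_mem' := fun {a} ha => by
        rwa [← Set.mem_inv, mul_inv_rev, inv_coe_set, inv_coe_set, ← h] }
  rw [sup_eq_closure_mul]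
  exact congrArg SetLike.coe (closure_eq J)

theorem card_coe_mul_dvd (H K : Subgroup G) :
    Nat.card ((H : Set G) * K : Set G) ∣ Nat.card H * Nat.card K := by
  rw [card_mul_eq_card_subgroup_mul_card_quotient, mul_comm]
  refine Nat.mul_dvd_mul ?_ dvd_rfl
  have himage : (H : Set G).image ((↑) : G → G ⧸ K) = MulAction.orbit H ((1 : G) : G ⧸ K) := by
    have hsmul (g : H) : g • ((1 : G) : G ⧸ K) = ((g : G) : G ⧸ K) := congrArg _ (mul_one _)
    ext
    simp [MulAction.mem_orbit_iff, hsmul]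
  rw [himage, Nat.card_congr (MulAction.orbitEquivQuotientStabilizer H _)]
  exact card_quotient_dvd_card _

theorem card_sup_dvd_of_coe_mul_comm {H K : Subgroup G} (h : (H : Set G) * K = K * H) :
    Nat.card ↥(H ⊔ K) ∣ Nat.card H * Nat.card K := by
  have := card_coe_mul_dvd H K
  rwa [← coe_sup_of_coe_mul_comm h] at this

theorem le_normalizer_of_coe_mul_comm [Finite G] {P Q N : Subgroup G} [N.Normal] (hPN : P ≤ N)
    (hNQ : (Nat.card N).Coprime (Nat.card Q)) (h : (P : Set G) * Q = Q * P) :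
    Q ≤ normalizer (P : Set G) := by
  set D := (P ⊔ Q) ⊓ N
  have hPD : P ≤ D := le_inf le_sup_left hPN
  have hDP : Nat.card D ∣ Nat.card P :=
    (Nat.Coprime.coprime_dvd_left (card_dvd_of_le inf_le_right) hNQ).dvd_of_dvd_mul_right
      ((card_dvd_of_le inf_le_left).trans (card_sup_dvd_of_coe_mul_comm h))
  have hPeq : P = D := eq_of_le_of_card_ge hPD (Nat.le_of_dvd Nat.card_pos hDP)
  calc Q ≤ P ⊔ Q := le_sup_right
    _ ≤ normalizer (P ⊔ Q : Subgroup G) ⊓ normalizer N :=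
      le_inf le_normalizer le_normalizer_of_normal
    _ ≤ normalizer D := inf_normalizer_le_normalizer_inf
    _ = normalizer P := by rw [← hPeq]

theorem le_normalCore_of_forall_le_sylow {p : ℕ} {P : Subgroup G} (h : ∀ S : Sylow p G, P ≤ S)
    (S : Sylow p G) : P ≤ (S : Subgroup G).normalCore := by
  intro a ha b
  have := h (b⁻¹ • S) ha
  rw [Sylow.coe_subgroup_smul, mem_pointwise_smul_iff_inv_smul_mem] at this
  simpa using this

theorem exists_index_eq_pow_of_sylow_le [Finite G] {p : ℕ} (H : Subgroup G)
    (h : ∀ q, q.Prime → q ≠ p → ∃ Q : Sylow q G, (Q : Subgroup G) ≤ H) :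
    ∃ k, H.index = p ^ k :=
  ⟨_, Nat.eq_prime_pow_of_unique_prime_dvd index_ne_zero_of_finite fun {q} hq hqH => by
    by_contra hqp
    have : Fact q.Prime := ⟨hq⟩
    obtain ⟨Q, hQ⟩ := h q hq hqp
    exact Q.not_dvd_index (hqH.trans (index_dvd_of_le hQ))⟩

end Subgroup

open Subgroup

section

variable {G : Type*} [Group G]

theorem IsPGroup.le_sylow_of_coe_mul_comm [Finite G] {p : ℕ} [Fact p.Prime] {P : Subgroup G}
    (hP : IsPGroup p P) (S : Sylow p G) (h : (P : Set G) * S = S * P) : P ≤ S := by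
  obtain ⟨a, ha⟩ := IsPGroup.iff_card.mp hP
  obtain ⟨b, hb⟩ := IsPGroup.iff_card.mp S.2
  have hPS : IsPGroup p ↥(P ⊔ S) := .of_card_dvd_pow (n := a + b) <| by
    rw [pow_add, ← ha, ← hb]
    exact card_sup_dvd_of_coe_mul_comm h
  exact le_sup_left.trans (S.is_maximal' hPS le_sup_right).le

theorem IsPGroup.le_of_isPGroup_quotient {p q : ℕ} [Fact p.Prime] [Fact q.Prime] (hqp : q ≠ p)
    {N Q : Subgroup G} [N.Normal] (hQ : IsPGroup q Q) (hN : IsPGroup p (G ⧸ N)) : Q ≤ N := by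
  have : Q.map (QuotientGroup.mk' N) = ⊥ :=
    disjoint_self.mp (IsPGroup.disjoint_of_ne q p hqp _ _ (hQ.map _) (hN.to_subgroup _))
  rwa [Subgroup.map_eq_bot_iff, QuotientGroup.ker_mk'] at this

instance pResidual_normal (p : ℕ) : (pResidual p G).Normal :=
  ⟨fun n hn g => mem_sInf.mpr fun N hN => hN.1.conj_mem n (mem_sInf.mp hn N hN) g⟩

theorem pResidual_le {p : ℕ} {N : Subgroup G} [hN : N.Normal] (h : ∃ k, N.index = p ^ k) :
    pResidual p G ≤ N :=
  sInf_le ⟨hN, h⟩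

theorem sylow_le_pResidual {p q : ℕ} [Fact p.Prime] [Fact q.Prime] (hqp : q ≠ p) (Q : Sylow q G) :
    (Q : Subgroup G) ≤ pResidual p G := by
  refine le_sInf fun N hN => ?_
  obtain ⟨_, _, hk⟩ := hN
  exact Q.2.le_of_isPGroup_quotient hqp (IsPGroup.of_card hk)

theorem pResidual_le_of_sylow_le [Finite G] {p : ℕ} {H : Subgroup G}
    (h : ∀ q, q.Prime → q ≠ p → ∀ Q : Sylow q G, (Q : Subgroup G) ≤ H) : pResidual p G ≤ H := by
  refine (pResidual_le (H.normalCore.exists_index_eq_pow_of_sylow_le ?_)).trans H.normalCore_le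
  intro q hq hqp
  have : Fact q.Prime := ⟨hq⟩
  obtain ⟨Q⟩ : Nonempty (Sylow q G) := inferInstance
  refine ⟨Q, fun x hx g => h q hq hqp (g • Q) ?_⟩
  rw [Sylow.coe_subgroup_smul]
  exact smul_mem_pointwise_smul x (MulAut.conj g) _ hx

theorem sylow_sup_pResidual_eq_top [Finite G] {p : ℕ} [Fact p.Prime] (S : Sylow p G) :
    (S : Subgroup G) ⊔ pResidual p G = ⊤ := by
  obtain ⟨k, hk⟩ := exists_index_eq_pow_of_sylow_le (p := p) (S ⊔ pResidual p G) fun q hq hqp => by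
    have : Fact q.Prime := ⟨hq⟩
    obtain ⟨Q⟩ : Nonempty (Sylow q G) := inferInstance
    exact ⟨Q, (sylow_le_pResidual hqp Q).trans le_sup_right⟩
  obtain rfl : k = 0 := by
    by_contra hk0
    exact S.not_dvd_index ((dvd_pow_self p hk0).trans (hk ▸ index_dvd_of_le le_sup_left))
  rwa [pow_zero, index_eq_one] at hk

theorem IsPGroup.le_sylow_of_pResidual_le_normalizer [Finite G] {p : ℕ} [Fact p.Prime]
    {P : Subgroup G} (hP : IsPGroup p P) (h : pResidual p G ≤ normalizer (P : Set G))
    (S : Sylow p G) : P ≤ S := by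
  obtain ⟨S₀, hPS₀⟩ := hP.exists_le_sylow
  obtain ⟨g, rfl⟩ := MulAction.exists_smul_eq G S₀ S
  have hg : g ∈ ((pResidual p G ⊔ S₀ : Subgroup G) : Set G) := by
    rw [sup_comm, sylow_sup_pResidual_eq_top]
    trivial
  rw [normal_mul] at hg
  obtain ⟨n, hn, s, hs, rfl⟩ := hg
  rw [mul_smul, Sylow.smul_eq_iff_mem_normalizer.mpr (le_normalizer hs)]
  intro x hx
  rw [Sylow.coe_subgroup_smul, mem_pointwise_smul_iff_inv_smul_mem]
  apply hPS₀
  simpa using (mem_normalizer_iff.mp (h (inv_mem hn)) x).mp hx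

end

/-- A `p`-subgroup `P` of a finite group `G` is s-permutable in `G` if and only if
`O^p(G) ≤ N_G(P)`. -/
theorem isSPermutable_iff_pResidual_le_normalizer {G : Type*} [Group G] [Finite G]
    {p : ℕ} (hp : p.Prime) (P : Subgroup G) (hP : IsPGroup p P) :
    IsSPermutable P ↔ pResidual p G ≤ Subgroup.normalizer (P : Set G) := by
  have : Fact p.Prime := ⟨hp⟩
  constructor
  · intro hperm
    have hPS (S : Sylow p G) : P ≤ S := hP.le_sylow_of_coe_mul_comm S (hperm p hp S)
    obtain ⟨S⟩ : Nonempty (Sylow p G) := inferInstance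
    refine pResidual_le_of_sylow_le fun q hq hqp Q => ?_
    have : Fact q.Prime := ⟨hq⟩
    refine le_normalizer_of_coe_mul_comm (le_normalCore_of_forall_le_sylow hPS S) ?_ (hperm q hq Q)
    exact IsPGroup.coprime_card_of_ne p q hqp.symm _ _ (S.2.to_le (normalCore_le _)) Q.2
  · intro hle q hq Q
    rcases eq_or_ne q p with rfl | hqp
    · exact set_mul_normalizer_comm _ _
        ((hP.le_sylow_of_pResidual_le_normalizer hle Q).trans le_normalizer)
    · have : Fact q.Prime := ⟨hq⟩
      exact (set_mul_normalizer_comm _ _ ((sylow_le_pResidual hqp Q).trans hle)).symm
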